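/- Let X̂ be the k-DSM-CYC instance produced by the gadget reduction from a k-DSMI-CYC instance X, let μ be a matching of X, and let μ̂ be the matching of X̂ induced by μ. Let t ∈ {0,…,k−1}, α ∈ I × {t}, j' ∈ J, and α' ∈ A be such that the non-dummy agent (0, α, t) prefers (j', α', t ⊕ 1) to μ̂(0, α, t) in X̂. Then (j', α', t ⊕ 1) appears in P̂'_α and α prefers α' to μ(α) in X. -/

import Mathlib

open Classical

/-- Cyclic successor on `Fin k` (addition of `1` modulo `k`). -/
def fsucc {k : ℕ} (t : Fin k) : Fin k := ⟨(t.1 + 1) % k, Nat.mod_lt _ t.pos⟩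

/-- Cyclic addition of a natural number, modulo `k`. -/
def fadd {k : ℕ} (t : Fin k) (s : ℕ) : Fin k := ⟨(t.1 + s) % k, Nat.mod_lt _ t.pos⟩

/-- An agent consists of an identifier and a type in `{0, …, k-1}`. -/
abbrev Agent (ι : Type) (k : ℕ) := ι × Fin k

/-- A preference profile of a `k`-DSMI-CYC instance over identifier set `ι`:
each agent has a list of agents. -/
abbrev Prefs (ι : Type) (k : ℕ) := Agent ι k → List (Agent ι k)

/-- Validity of a `k`-DSMI-CYC instance: each preference list is duplicate-free and
contains only agents of the cyclically next type. -/
def ValidPrefs {ι : Type} {k : ℕ} (P : Prefs ι k) : Prop :=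
  (∀ a, (P a).Nodup) ∧ ∀ a b, b ∈ P a → b.2 = fsucc a.2

/-- Completeness: every agent of the next type appears in the preference list
(this is the `k`-DSM-CYC special case). -/
def CompletePrefs {ι : Type} {k : ℕ} (P : Prefs ι k) : Prop :=
  ∀ a b : Agent ι k, b.2 = fsucc a.2 → b ∈ P a

/-- `a` prefers `b` to `c`: `b` appears in `a`'s list, and `c` appears later or not at all. -/
def Prefers {ι : Type} [DecidableEq ι] {k : ℕ} (P : Prefs ι k) (a b c : Agent ι k) : Prop :=
  b ∈ P a ∧ (c ∉ P a ∨ (P a).idxOf b < (P a).idxOf c)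

/-- A family: a `k`-tuple where the `t`-th member has type `t` and finds the next member
acceptable. -/
def IsFamily {ι : Type} {k : ℕ} (P : Prefs ι k) (F : Fin k → Agent ι k) : Prop :=
  ∀ t, (F t).2 = t ∧ F (fsucc t) ∈ P (F t)

/-- A matching: a set of pairwise agent-disjoint families. -/
def IsMatching {ι : Type} {k : ℕ} (P : Prefs ι k) (μ : Set (Fin k → Agent ι k)) : Prop :=
  (∀ F ∈ μ, IsFamily P F) ∧ ∀ F ∈ μ, ∀ F' ∈ μ, ∀ t, F t = F' t → F = F'

/-- The partner `μ(a)` of agent `a` in matching `μ`: the next member of a family of `μ`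
containing `a`, and `a` itself if `a` is unmatched. -/
noncomputable def partner {ι : Type} {k : ℕ} (μ : Set (Fin k → Agent ι k)) (a : Agent ι k) :
    Agent ι k :=
  if h : ∃ F ∈ μ, F a.2 = a then h.choose (fsucc a.2) else a

/-- A strongly blocking family of `μ`: each member prefers the next member to its partner. -/
def StronglyBlocks {ι : Type} [DecidableEq ι] {k : ℕ} (P : Prefs ι k)
    (μ : Set (Fin k → Agent ι k)) (F : Fin k → Agent ι k) : Prop :=
  IsFamily P F ∧ ∀ t, Prefers P (F t) (F (fsucc t)) (partner μ (F t))

/-- A weakly stable matching: a matching admitting no strongly blocking family. -/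
def WeaklyStable {ι : Type} [DecidableEq ι] {k : ℕ} (P : Prefs ι k)
    (μ : Set (Fin k → Agent ι k)) : Prop :=
  IsMatching P μ ∧ ∀ F, ¬ StronglyBlocks P μ F

/-- The identifier component `J = {0, …, (k−1)²}` of the gadget reduction. -/
abbrev JId (k : ℕ) := Fin ((k - 1) ^ 2 + 1)

/-- Identifiers of the gadget instance: `J × A`, where `A` is the agent set of the
input instance (with identifiers `{0, …, n−1}`, so that agents compare
lexicographically). -/
abbrev HatId (n k : ℕ) := JId k × Agent (Fin n) k

/-- `P̂'_α`: the preference list of `α` with every entry `α'` replaced by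
`(0, α', t ⊕ 1)`. -/
def hatP' {n k : ℕ} (P : Prefs (Fin n) k) (a : Agent (Fin n) k) :
    List (Agent (HatId n k) k) :=
  (P a).map fun b => (((0 : JId k), b), fsucc a.2)

/-- All agents `(j', a, t')` of the gadget of `a`, for `j' ∈ J` in increasing order. -/
def gadgetColumn {n k : ℕ} (a : Agent (Fin n) k) (t' : Fin k) :
    List (Agent (HatId n k) k) :=
  (List.finRange ((k - 1) ^ 2 + 1)).map fun j => ((j, a), t')

/-- The agents of the input instance in increasing lexicographic order. -/
def enumA (n k : ℕ) : List (Agent (Fin n) k) :=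
  (List.finRange n).flatMap fun i => (List.finRange k).map fun t => (i, t)

/-- The prescribed initial segment of the preference list of each agent of the gadget
instance: a non-dummy agent `(0, α, t)` (where `α` has type `t`) starts with `P̂'_α`
followed by its own gadget's next row; a boundary dummy agent `((k−1)², α, t)` starts
with its own gadget's next row (up to `j' < (k−1)²`) followed by all boundary agents of
the next type in increasing lexicographic order; a non-boundary dummy agent starts with
its own gadget's next row.  The rest of each preference list is arbitrary. -/
def gadgetPrefix {n k : ℕ} (P : Prefs (Fin n) k) (b : Agent (HatId n k) k) :
    List (Agent (HatId n k) k) :=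
  if b.1.1 = (0 : JId k) ∧ b.1.2.2 = b.2 then
    hatP' P b.1.2 ++ gadgetColumn b.1.2 (fsucc b.2)
  else if b.1.1 = Fin.last ((k - 1) ^ 2) then
    ((List.finRange ((k - 1) ^ 2)).map fun j => ((j.castSucc, b.1.2), fsucc b.2)) ++
      ((enumA n k).map fun a' => ((Fin.last ((k - 1) ^ 2), a'), fsucc b.2))
  else
    gadgetColumn b.1.2 (fsucc b.2)

/-- `Phat` is a `k`-DSM-CYC instance produced by the gadget reduction from `P`:
it is valid and complete, and each preference list begins with the prescribed
initial segment. -/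
def IsGadgetLift {n k : ℕ} (P : Prefs (Fin n) k) (Phat : Prefs (HatId n k) k) : Prop :=
  ValidPrefs Phat ∧ CompletePrefs Phat ∧ ∀ b, (gadgetPrefix P b).IsPrefix (Phat b)

/-- The matching of the input instance induced by a matching `μ̂` of the gadget
instance: the families `(α₀, …, α_{k−1})` of the input instance such that
`((0, α₀, 0), …, (0, α_{k−1}, k−1)) ∈ μ̂`. -/
def inducedDown {n k : ℕ} (P : Prefs (Fin n) k)
    (μhat : Set (Fin k → Agent (HatId n k) k)) : Set (Fin k → Agent (Fin n) k) :=
  { G | IsFamily P G ∧ (fun t : Fin k => (((0 : JId k), G t), t)) ∈ μhat }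

/-- `δ_t(α) = 1` if `α` is matched in `μ` and has type `t`, and `δ_t(α) = 0`
otherwise. -/
noncomputable def delta {n k : ℕ} (μ : Set (Fin k → Agent (Fin n) k)) (t : Fin k)
    (a : Agent (Fin n) k) : ℕ :=
  if partner μ a ≠ a ∧ a.2 = t then 1 else 0

/-- The element `j + δ_t(α)` of `J` (for `j < (k−1)²` this is just `j + δ_t(α)`). -/
noncomputable def jshift {n k : ℕ} (μ : Set (Fin k → Agent (Fin n) k)) (j : ℕ) (t : Fin k)
    (a : Agent (Fin n) k) : JId k :=
  ⟨(j + delta μ t a) % ((k - 1) ^ 2 + 1), Nat.mod_lt _ (Nat.succ_pos _)⟩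

/-- `R_t`: the boundary agents `((k−1)², α', t)` with `δ_t(α') = 0`, in increasing
lexicographic order. -/
noncomputable def Rlist {n k : ℕ} (μ : Set (Fin k → Agent (Fin n) k)) (t : Fin k) :
    List (Agent (HatId n k) k) :=
  ((enumA n k).filter fun a => decide (delta μ t a = 0)).map
    fun a => ((Fin.last ((k - 1) ^ 2), a), t)

/-- The matching `μ̂` of the gadget instance induced by a matching `μ` of the input
instance, consisting of (i) the lifted families `((0, α₀, 0), …, (0, α_{k−1}, k−1))`
for `(α₀, …, α_{k−1}) ∈ μ`, (ii) the families `((j + δ₀(α), α, 0), …,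
(j + δ_{k−1}(α), α, k−1))` for `α ∈ A` and `j < (k−1)²`, and (iii) the families
`(R₀[s], …, R_{k−1}[s])` for `0 ≤ s < |A| − |μ|`. -/
noncomputable def inducedUp {n k : ℕ} (μ : Set (Fin k → Agent (Fin n) k)) :
    Set (Fin k → Agent (HatId n k) k) :=
  { F | (∃ G ∈ μ, ∀ t : Fin k, F t = (((0 : JId k), G t), t)) ∨
      (∃ (a : Agent (Fin n) k) (j : ℕ), j < (k - 1) ^ 2 ∧
        ∀ t : Fin k, F t = ((jshift μ j t a, a), t)) ∨
      (∃ s : ℕ, s < n * k - μ.ncard ∧ ∀ t : Fin k, (Rlist μ t)[s]? = some (F t)) }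

section GadgetHelpers
set_option linter.unusedSectionVars false

variable {γ : Type*} [BEq γ] [LawfulBEq γ]

private lemma bidx_cons (a b : γ) (l : List γ) :
    (b :: l).idxOf a = if b == a then 0 else l.idxOf a + 1 := by
  simp only [List.idxOf_cons, cond_eq_if]

private lemma bidx_cons_eq {a b : γ} (hb : b = a) (l : List γ) : (b :: l).idxOf a = 0 := by
  rw [bidx_cons, if_pos (by simpa using hb)]

private lemma bidx_cons_ne {a b : γ} (hb : b ≠ a) (l : List γ) :
    (b :: l).idxOf a = l.idxOf a + 1 := by
  rw [bidx_cons, if_neg (by simpa using hb)]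

private lemma bidx_append_of_mem {l₁ l₂ : List γ} {a : γ} (h : a ∈ l₁) :
    (l₁ ++ l₂).idxOf a = l₁.idxOf a := by
  induction l₁ with
  | nil => simp at h
  | cons b l ih =>
    by_cases hb : b = a
    · rw [List.cons_append, bidx_cons_eq hb, bidx_cons_eq hb]
    · rw [List.cons_append, bidx_cons_ne hb, bidx_cons_ne hb,
        ih (by rcases List.mem_cons.1 h with h | h; exacts [absurd h.symm hb, h])]

private lemma bidx_append_of_not_mem {l₁ l₂ : List γ} {a : γ} (h : a ∉ l₁) :
    (l₁ ++ l₂).idxOf a = l₁.length + l₂.idxOf a := by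
  induction l₁ with
  | nil => simp
  | cons b l ih =>
    rw [List.cons_append, bidx_cons_ne (fun hb => h (List.mem_cons.2 (Or.inl hb.symm))),
      ih (fun hm => h (List.mem_cons_of_mem _ hm)), List.length_cons]
    omega

private lemma bidx_lt_length {l : List γ} {a : γ} (h : a ∈ l) : l.idxOf a < l.length := by
  induction l with
  | nil => simp at h
  | cons b l ih =>
    by_cases hb : b = a
    · rw [bidx_cons_eq hb]; simp
    · rw [bidx_cons_ne hb, List.length_cons]
      have := ih (by rcases List.mem_cons.1 h with h | h; exacts [absurd h.symm hb, h])
      omega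

private lemma bidx_map_inj {β : Type*} [BEq β] [LawfulBEq β] {f : γ → β}
    (hf : Function.Injective f) (l : List γ) (x : γ) :
    (l.map f).idxOf (f x) = l.idxOf x := by
  induction l with
  | nil => rfl
  | cons a l ih =>
    by_cases h : a = x
    · rw [List.map_cons, bidx_cons_eq (congrArg f h), bidx_cons_eq h]
    · rw [List.map_cons, bidx_cons_ne (fun hh => h (hf hh)), bidx_cons_ne h, ih]

private lemma bidx_prefix_eq {l₁ l₂ : List γ} (h : l₁ <+: l₂) {x : γ} (hx : x ∈ l₁) :
    l₂.idxOf x = l₁.idxOf x := by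
  obtain ⟨s, rfl⟩ := h; exact bidx_append_of_mem hx

private lemma bidx_mem_of_lt_prefix {l₁ l₂ : List γ} (h : l₁ <+: l₂) {x : γ}
    (hlt : l₂.idxOf x < l₁.length) : x ∈ l₁ ∧ l₁.idxOf x = l₂.idxOf x := by
  obtain ⟨s, rfl⟩ := h
  by_cases hm : x ∈ l₁
  · exact ⟨hm, (bidx_append_of_mem hm).symm⟩
  · rw [bidx_append_of_not_mem hm] at hlt; omega

private lemma fsucc_ne' {k : ℕ} (hk : 2 ≤ k) (t : Fin k) : fsucc t ≠ t := by
  intro h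
  have h' : (t.1 + 1) % k = t.1 := congrArg Fin.val h
  have ht := t.2
  rcases Nat.lt_or_ge (t.1 + 1) k with hlt | hge
  · rw [Nat.mod_eq_of_lt hlt] at h'; omega
  · have hh : t.1 + 1 = k := by omega
    rw [hh, Nat.mod_self] at h'; omega



private lemma lt_transfer {γ : Type*} {i1 i2 : BEq γ}
    {a b : γ} {l m : List γ} (h : @List.idxOf γ i1 a l < @List.idxOf γ i1 b m)
    (h1 : @LawfulBEq γ i1) (h2 : @LawfulBEq γ i2) :
    @List.idxOf γ i2 a l < @List.idxOf γ i2 b m := by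
  cases @lawful_beq_subsingleton γ i1 i2 h1 h2; exact h
end GadgetHelpers

/-- (Preference lemma.)  Let `μ` be a matching of the input instance
and `μ̂` the induced matching of the gadget instance.  If the non-dummy agent `(0, α, t)`
(where `α` has type `t`) prefers `(j', α', t ⊕ 1)` to its partner in `μ̂`, then
`(j', α', t ⊕ 1)` lies in `P̂'_α` and `α` prefers `α'` to `μ(α)`. -/
theorem gadget_preference {n k : ℕ} (hk : 3 ≤ k) (P : Prefs (Fin n) k)
    (hP : ValidPrefs P) (Phat : Prefs (HatId n k) k) (hlift : IsGadgetLift P Phat)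
    (μ : Set (Fin k → Agent (Fin n) k)) (hμ : IsMatching P μ)
    (t : Fin k) (a : Agent (Fin n) k) (hty : a.2 = t)
    (j' : JId k) (a' : Agent (Fin n) k)
    (hpref : Prefers Phat (((0 : JId k), a), t) ((j', a'), fsucc t)
      (partner (inducedUp μ) (((0 : JId k), a), t))) :
    ((j', a'), fsucc t) ∈ hatP' P a ∧ Prefers P a a' (partner μ a) := by
  obtain ⟨i, ty⟩ := a
  have hty2 : ty = t := hty
  subst ty
  have fne : fsucc t ≠ t := fsucc_ne' (by omega) t
  have hnma : ((i, t) : Agent (Fin n) k) ∉ P (i, t) := fun h => fne (hP.2 _ _ h).symm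
  -- existence of a family of μ̂ containing b = ((0,(i,t)),t)
  have hex : ∃ F ∈ inducedUp μ,
      F ((((0 : JId k), (i, t)), t) : Agent (HatId n k) k).2 = (((0 : JId k), (i, t)), t) := by
    by_cases hm : ∃ G ∈ μ, G t = (i, t)
    · obtain ⟨G, hG, hGt⟩ := hm
      exact ⟨fun t' => (((0 : JId k), G t'), t'), Or.inl ⟨G, hG, fun _ => rfl⟩, by
        show ((((0 : JId k), G t), t) : Agent (HatId n k) k) = _; rw [hGt]⟩
    · have hpa : partner μ (i, t) = (i, t) := by
        unfold partner
        rw [dif_neg]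
        rintro ⟨F, hF, hFt⟩
        exact hm ⟨F, hF, hFt⟩
      have hd : delta μ t (i, t) = 0 := by simp [delta, hpa]
      refine ⟨fun t' => ((jshift μ 0 t' (i, t), (i, t)), t'),
        Or.inr (Or.inl ⟨(i, t), 0, pow_pos (by omega) 2, fun _ => rfl⟩), ?_⟩
      show ((jshift μ 0 t (i, t), (i, t)), t) = _
      simp [jshift, hd]
  have hcdef : partner (inducedUp μ) (((0 : JId k), (i, t)), t) = hex.choose (fsucc t) := by
    unfold partner
    rw [dif_pos hex]
  obtain ⟨hmem, hchooset⟩ := hex.choose_spec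
  -- the partner is ((0,x), fsucc t) with x = partner μ (i,t)
  have key : ∃ x : Agent (Fin n) k, hex.choose (fsucc t) = (((0 : JId k), x), fsucc t)
      ∧ partner μ (i, t) = x ∧ (x ∈ P (i, t) ∨ x = (i, t)) := by
    rcases hmem with ⟨G, hG, hGeq⟩ | ⟨a₀, j, hj, hFeq⟩ | ⟨s, hs, hFeq⟩
    · have hGt : G t = (i, t) := by
        have h1 := (hGeq t).symm.trans hchooset
        simpa using congrArg (fun z => z.1.2) h1
      have hex2 : ∃ F ∈ μ, F (((i, t) : Agent (Fin n) k)).2 = (i, t) := ⟨G, hG, hGt⟩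
      refine ⟨G (fsucc t), hGeq (fsucc t), ?_, Or.inl ?_⟩
      · unfold partner
        rw [dif_pos hex2]
        obtain ⟨h1, h2⟩ := hex2.choose_spec
        have := hμ.2 _ h1 _ hG t (h2.trans hGt.symm)
        rw [this]
      · have hf := hμ.1 G hG t
        rw [hGt] at hf
        exact hf.2
    · have h1 := (hFeq t).symm.trans hchooset
      have ha0 : a₀ = (i, t) := by simpa using congrArg (fun z => z.1.2) h1
      subst ha0
      have hjv : (j + delta μ t (i, t)) % ((k - 1) ^ 2 + 1) = 0 := by
        simpa [jshift, Fin.ext_iff] using congrArg (fun z => z.1.1) h1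
      have hdle : delta μ t (i, t) ≤ 1 := by unfold delta; split <;> simp
      rw [Nat.mod_eq_of_lt (by omega)] at hjv
      have hj0 : j = 0 := by omega
      have hd0 : delta μ t (i, t) = 0 := by omega
      have hpa : partner μ (i, t) = (i, t) := by
        by_contra hne
        simp [delta, hne] at hd0
      refine ⟨(i, t), ?_, hpa, Or.inr rfl⟩
      rw [hFeq (fsucc t)]
      have hd' : delta μ (fsucc t) (i, t) = 0 := by
        unfold delta
        rw [if_neg]
        rintro ⟨-, h⟩
        exact fne h.symm
      simp [jshift, hj0, hd']
    · exfalso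
      have h1 := hFeq t
      rw [hchooset] at h1
      have hmem' : ((((0 : JId k), (i, t)), t) : Agent (HatId n k) k) ∈ Rlist μ t := by
        obtain ⟨hlt', he⟩ := List.getElem?_eq_some_iff.1 h1
        exact he ▸ List.getElem_mem hlt'
      obtain ⟨a'', -, heq⟩ := List.mem_map.1 hmem'
      have h3 : Fin.last ((k - 1) ^ 2) = (0 : JId k) := congrArg (fun z => z.1.1) heq
      have h2 : (k - 1) ^ 2 = 0 := by simpa [Fin.ext_iff] using h3
      have h4 : 2 ≤ k - 1 := by omega
      nlinarith
  obtain ⟨x, hcx, hpx, hx⟩ := key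
  rw [hcdef, hcx] at hpref
  obtain ⟨hp1, hp2⟩ := hpref
  -- prefix facts
  have hpre : (hatP' P (i, t) ++ gadgetColumn (i, t) (fsucc t)) <+:
      Phat (((0 : JId k), (i, t)), t) := by
    have h := hlift.2.2 (((0 : JId k), (i, t)), t)
    rw [gadgetPrefix, if_pos ⟨rfl, rfl⟩] at h
    exact h
  have hpreH : hatP' P (i, t) <+: Phat (((0 : JId k), (i, t)), t) :=
    (List.prefix_append _ _).trans hpre
  have hcL : (((0 : JId k), x), fsucc t) ∈ Phat (((0 : JId k), (i, t)), t) :=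
    hlift.2.1 _ _ rfl
  have hlt : (Phat (((0 : JId k), (i, t)), t)).idxOf ((j', a'), fsucc t) <
      (Phat (((0 : JId k), (i, t)), t)).idxOf (((0 : JId k), x), fsucc t) := by
    rcases hp2 with h | h
    · exact absurd hcL h
    · refine lt_transfer h ?_ ?_ <;>
      first
        | exact @instLawfulBEq _ _
        | exact @Prod.instLawfulBEq _ _ instBEqOfDecidableEq instBEqOfDecidableEq
            (@instLawfulBEq _ _) (@instLawfulBEq _ _)
        | exact @Prod.instLawfulBEq _ _ instBEqProd instBEqOfDecidableEq
            (@Prod.instLawfulBEq _ _ instBEqOfDecidableEq instBEqOfDecidableEq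
              (@instLawfulBEq _ _) (@instLawfulBEq _ _))
            (@instLawfulBEq _ _)
        | infer_instance
  have hinj : Function.Injective
      (fun y : Agent (Fin n) k => ((((0 : JId k), y), fsucc t) : Agent (HatId n k) k)) :=
    fun u v h => by simpa using h
  -- index of the partner is at most |H|
  have hcle : (Phat (((0 : JId k), (i, t)), t)).idxOf (((0 : JId k), x), fsucc t) ≤
      (hatP' P (i, t)).length := by
    rcases hx with hxP | hxe
    · have hcH : (((0 : JId k), x), fsucc t) ∈ hatP' P (i, t) := List.mem_map.2 ⟨x, hxP, rfl⟩
      rw [bidx_prefix_eq hpreH hcH]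
      exact le_of_lt (bidx_lt_length hcH)
    · subst hxe
      have hcH : ((((0 : JId k), (i, t)), fsucc t) : Agent (HatId n k) k) ∉ hatP' P (i, t) := by
        intro h
        obtain ⟨y, hy, heq⟩ := List.mem_map.1 h
        have hyx : y = (i, t) := by simpa using congrArg (fun z => z.1.2) heq
        exact hnma (hyx ▸ hy)
      have hcC : ((((0 : JId k), (i, t)), fsucc t) : Agent (HatId n k) k) ∈
          gadgetColumn (i, t) (fsucc t) :=
        List.mem_map.2 ⟨0, List.mem_finRange _, rfl⟩
      rw [bidx_prefix_eq hpre (List.mem_append_right _ hcC),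
        bidx_append_of_not_mem hcH]
      have hC0 : (gadgetColumn (i, t) (fsucc t)).idxOf
          ((((0 : JId k), (i, t)), fsucc t) : Agent (HatId n k) k) = 0 := by
        rw [gadgetColumn, List.finRange_succ, List.map_cons]
        exact bidx_cons_eq rfl _
      omega
  have hplt : (Phat (((0 : JId k), (i, t)), t)).idxOf ((j', a'), fsucc t) <
      (hatP' P (i, t)).length := lt_of_lt_of_le hlt hcle
  obtain ⟨hpH, hpidx⟩ := bidx_mem_of_lt_prefix hpreH hplt
  refine ⟨hpH, ?_⟩
  obtain ⟨y, hyP, heq⟩ := List.mem_map.1 hpH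
  have h00 : (0 : JId k) = j' ∧ y = a' := by
    have h2 : (((0 : JId k), y) : HatId n k) = (j', a') := congrArg Prod.fst heq
    exact ⟨congrArg Prod.fst h2, congrArg Prod.snd h2⟩
  obtain ⟨hj'0, rfl⟩ := h00
  subst hj'0
  rw [hpx]
  refine ⟨hyP, ?_⟩
  rcases hx with hxP | hxe
  · right
    have hcH : (((0 : JId k), x), fsucc t) ∈ hatP' P (i, t) := List.mem_map.2 ⟨x, hxP, rfl⟩
    have hfin : (P (i, t)).idxOf y < (P (i, t)).idxOf x := by
      have e1 : (hatP' P (i, t)).idxOf (((0 : JId k), y), fsucc t) = (P (i, t)).idxOf y :=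
        bidx_map_inj hinj (P (i, t)) y
      have e2 : (hatP' P (i, t)).idxOf (((0 : JId k), x), fsucc t) = (P (i, t)).idxOf x :=
        bidx_map_inj hinj (P (i, t)) x
      rw [← e1, ← e2, hpidx, ← bidx_prefix_eq hpreH hcH]
      exact hlt
    refine lt_transfer hfin ?_ ?_ <;>
      first
        | exact @instLawfulBEq _ _
        | exact @Prod.instLawfulBEq _ _ instBEqOfDecidableEq instBEqOfDecidableEq
            (@instLawfulBEq _ _) (@instLawfulBEq _ _)
        | exact @Prod.instLawfulBEq _ _ instBEqProd instBEqOfDecidableEq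
            (@Prod.instLawfulBEq _ _ instBEqOfDecidableEq instBEqOfDecidableEq
              (@instLawfulBEq _ _) (@instLawfulBEq _ _))
            (@instLawfulBEq _ _)
        | infer_instance
  · subst hxe
    left
    exact hnma
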